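/- Let Q be a bounded sublinear rate operator on ℬ. Then for all real Δ ≥ 0 with Δ·‖Q‖ ≤ 2 and all ℓ ∈ ℕ, ‖(I + (Δ/ℓ)Q)^ℓ − (I + ΔQ)‖ ≤ Δ²·‖Q‖², where ‖·‖ denotes the operator seminorm and (I + (Δ/ℓ)Q)^ℓ is the ℓ-fold composition. -/

import Mathlib

open Filter Topology BoundedContinuousFunction ENNReal NNReal

/-- The space of (possibly nonlinear) operators on the Banach space `X →ᵇ ℝ`
of bounded (continuous, i.e. with `X` discrete: all) real-valued functions. -/
abbrev Op (X : Type*) [TopologicalSpace X] :=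
  BoundedContinuousFunction X ℝ → BoundedContinuousFunction X ℝ

/-- The operator seminorm `‖A‖ = sup {‖A f‖/‖f‖ : f ≠ 0}`, a value in `[0,∞]`. -/
noncomputable def opSemiNorm {X : Type*} [TopologicalSpace X] (A : Op X) : ℝ≥0∞ :=
  ⨆ (f : BoundedContinuousFunction X ℝ) (_ : f ≠ 0), (‖A f‖₊ : ℝ≥0∞) / (‖f‖₊ : ℝ≥0∞)

/-- The operator norm distance `d(A,B) = ‖A 0 − B 0‖∞ + ‖A − B‖`. -/
noncomputable def opDist {X : Type*} [TopologicalSpace X] (A B : Op X) : ℝ≥0∞ :=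
  (‖A 0 - B 0‖₊ : ℝ≥0∞) + opSemiNorm (A - B)

/-- Sublinear transition operator: (T1) positive homogeneity, (T2) subadditivity,
(T3) `T f ≤ sup f` pointwise. -/
def IsSublinearTransition {X : Type*} [TopologicalSpace X] (T : Op X) : Prop :=
  (∀ (c : ℝ), 0 ≤ c → ∀ f, T (c • f) = c • T f) ∧
  (∀ f g, ∀ x, T (f + g) x ≤ T f x + T g x) ∧
  (∀ f, ∀ x, T f x ≤ ⨆ y, f y)

/-- Sublinear rate operator: (Q1) positive homogeneity, (Q2) subadditivity,
(Q3) constants map to zero, (Q4) positive maximum principle. -/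
def IsSublinearRate {X : Type*} [TopologicalSpace X] (Q : Op X) : Prop :=
  (∀ (c : ℝ), 0 ≤ c → ∀ f, Q (c • f) = c • Q f) ∧
  (∀ f g, ∀ x, Q (f + g) x ≤ Q f x + Q g x) ∧
  (∀ (c : ℝ), Q (BoundedContinuousFunction.const X c) = 0) ∧
  (∀ f, ∀ x : X, (⨆ y, f y) = f x → 0 ≤ f x → Q f x ≤ 0)

/-- The Euler approximation `(I + (t/n) Q)^n` (n-fold composition). -/
noncomputable def euler {X : Type*} [TopologicalSpace X] (Q : Op X) (t : ℝ) (n : ℕ) : Op X :=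
  (fun f => f + (t / (n : ℝ)) • Q f)^[n]

/-- Uniform continuity of a semigroup `(S_t)_{t ≥ 0}`:
`‖S_s − S_t‖ → 0` as `s → t` (within `s ≥ 0`), for every `t ≥ 0`. -/
def IsUniformlyContinuousSG {X : Type*} [TopologicalSpace X] (S : ℝ → Op X) : Prop :=
  ∀ t : ℝ, 0 ≤ t →
    Tendsto (fun s => opSemiNorm (S s - S t)) (nhdsWithin t (Set.Ici 0)) (nhds 0)

/-- The indicator function `1_x` of the singleton `{x}`. -/
noncomputable def indic {X : Type*} [TopologicalSpace X] [DiscreteTopology X] (x : X) :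
    BoundedContinuousFunction X ℝ :=
  BoundedContinuousFunction.ofNormedAddCommGroup
    (Set.indicator {x} (fun _ => (1 : ℝ))) continuous_of_discreteTopology 1
    (by
      intro y
      classical
      rw [Set.indicator_apply]
      split_ifs <;> simp)

/-- Downward continuity (continuity from above) of an operator. -/
def DownwardContinuous {X : Type*} [TopologicalSpace X] (A : Op X) : Prop :=
  ∀ (f : ℕ → BoundedContinuousFunction X ℝ) (g : BoundedContinuousFunction X ℝ),
    (∀ n x, f (n + 1) x ≤ f n x) →
    (∀ x, Tendsto (fun n => f n x) atTop (nhds (g x))) →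
    ∀ x, Tendsto (fun n => A (f n) x) atTop (nhds (A g x))

/-! With `M = ‖Q‖` and `h = Δ/ℓ`, the positive maximum principle gives `Q f x ≤ M (sup f - f x)`,
so for `h M ≤ 1` the step `I + hQ` is non-expansive in sup-norm, while sublinearity makes `Q`
`M`-Lipschitz. Hence the iterates drift from `f` by at most `k h M ‖f‖`, and comparing
`(I + hQ)^k` with `I + k h Q` step by step accumulates an error of at most
`Σ_{j<k} j (hM)² ‖f‖ ≤ k²/2 (hM)² ‖f‖`; at `k = ℓ` this is `(ΔM)²/2 ‖f‖`. -/

section OperatorSeminorm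

variable {X : Type*} [TopologicalSpace X]

lemma norm_apply_le_opSemiNorm {A : Op X} (hA : opSemiNorm A ≠ ⊤) (hA0 : A 0 = 0)
    (f : X →ᵇ ℝ) : ‖A f‖ ≤ (opSemiNorm A).toReal * ‖f‖ := by
  rcases eq_or_ne f 0 with rfl | hf
  · simp [hA0]
  have hle : (‖A f‖₊ : ℝ≥0∞) / ‖f‖₊ ≤ opSemiNorm A :=
    le_iSup₂ (f := fun g (_ : g ≠ 0) => (‖A g‖₊ : ℝ≥0∞) / ‖g‖₊) f hf
  rw [ENNReal.div_le_iff (by simpa using hf) ENNReal.coe_ne_top] at hle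
  simpa [ENNReal.toReal_mul] using
    ENNReal.toReal_mono (ENNReal.mul_ne_top hA ENNReal.coe_ne_top) hle

lemma opSemiNorm_le_ofReal {A : Op X} {C : ℝ} (hC : 0 ≤ C) (h : ∀ f, ‖A f‖ ≤ C * ‖f‖) :
    opSemiNorm A ≤ ENNReal.ofReal C := by
  refine iSup₂_le fun f hf => ?_
  rw [ENNReal.div_le_iff (by simpa using hf) ENNReal.coe_ne_top, ← enorm_eq_nnnorm,
    ← enorm_eq_nnnorm, ← ofReal_norm, ← ofReal_norm, ← ENNReal.ofReal_mul hC]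
  exact ENNReal.ofReal_le_ofReal (h f)

end OperatorSeminorm

section Indicator

variable {X : Type*} [TopologicalSpace X] [DiscreteTopology X]

lemma indic_apply_self (x : X) : indic x x = 1 := by
  simp [indic]

lemma indic_apply_of_ne {x y : X} (h : y ≠ x) : indic x y = 0 := by
  simp [indic, h]

lemma norm_indic_le (x : X) : ‖indic x‖ ≤ 1 :=
  norm_ofNormedAddCommGroup_le _ zero_le_one _

end Indicator

namespace IsSublinearRate

variable {X : Type*} [TopologicalSpace X] {Q : Op X}

lemma map_zero (hQ : IsSublinearRate Q) : Q 0 = 0 := by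
  simpa using hQ.1 0 le_rfl 0

lemma lipschitzWith (hQ : IsSublinearRate Q) (hQb : opSemiNorm Q ≠ ⊤) :
    LipschitzWith (opSemiNorm Q).toNNReal Q := by
  have key : ∀ u v x, Q u x - Q v x ≤ (opSemiNorm Q).toReal * ‖u - v‖ := fun u v x => by
    have h₁ := hQ.2.1 v (u - v) x
    rw [add_sub_cancel] at h₁
    have h₂ := (Q (u - v)).apply_le_norm x
    have h₃ := norm_apply_le_opSemiNorm hQb hQ.map_zero (u - v)
    linarith
  refine LipschitzWith.of_dist_le_mul fun u v => ?_
  rw [dist_eq_norm, dist_eq_norm, norm_le (by positivity)]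
  intro x
  have h₁ := key v u x
  rw [norm_sub_rev] at h₁
  rw [BoundedContinuousFunction.sub_apply, Real.norm_eq_abs, abs_le,
    ENNReal.coe_toNNReal_eq_toReal]
  exact ⟨by linarith, key u v x⟩

variable [DiscreteTopology X]

lemma apply_le_mul_iSup_sub (hQ : IsSublinearRate Q) (hQb : opSemiNorm Q ≠ ⊤)
    (f : X →ᵇ ℝ) (x : X) : Q f x ≤ (opSemiNorm Q).toReal * ((⨆ y, f y) - f x) := by
  have : Nonempty X := ⟨x⟩
  have hbdd : BddAbove (Set.range f) := ⟨‖f‖, Set.forall_mem_range.2 f.apply_le_norm⟩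
  set s := ⨆ y, f y
  set a := s - f x
  have ha : 0 ≤ a := sub_nonneg.2 (le_ciSup hbdd x)
  -- raising `f` at `x` to its supremum and shifting by `-s` yields a function peaking at `x`
  -- with value `0`, to which the positive maximum principle applies
  set g := f + a • indic x + const X (-s)
  have hg : ∀ y, g y = f y + a * indic x y - s := fun y => by simp [g, sub_eq_add_neg]
  have hgx : g x = 0 := by rw [hg, indic_apply_self]; ring
  have hg_le : ∀ y, g y ≤ g x := fun y => by
    rcases eq_or_ne y x with rfl | hyx
    · exact le_rfl
    · rw [hg, indic_apply_of_ne hyx, hgx]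
      linarith [le_ciSup hbdd y]
  have hg_sup : ⨆ y, g y = g x :=
    le_antisymm (ciSup_le hg_le) (le_ciSup ⟨g x, Set.forall_mem_range.2 hg_le⟩ x)
  have hf : f = g + (-(a • indic x) + const X s) := by ext y; simp [g]; ring
  have hbump : Q (-(a • indic x)) x ≤ (opSemiNorm Q).toReal * a := by
    have hnorm : ‖-(a • indic x)‖ ≤ a := by
      rw [norm_neg, norm_smul, Real.norm_eq_abs, abs_of_nonneg ha]
      exact mul_le_of_le_one_right ha (norm_indic_le x)
    calc Q (-(a • indic x)) x ≤ ‖Q (-(a • indic x))‖ := apply_le_norm _ x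
      _ ≤ (opSemiNorm Q).toReal * ‖-(a • indic x)‖ :=
        norm_apply_le_opSemiNorm hQb hQ.map_zero _
      _ ≤ (opSemiNorm Q).toReal * a := by gcongr
  calc Q f x ≤ Q g x + (Q (-(a • indic x)) x + Q (const X s) x) := by
        conv_lhs => rw [hf]
        exact (hQ.2.1 _ _ x).trans (add_le_add le_rfl (hQ.2.1 _ _ x))
    _ ≤ 0 + ((opSemiNorm Q).toReal * a + 0) := by
        rw [hQ.2.2.1]
        gcongr
        · exact hQ.2.2.2 g x hg_sup hgx.ge
        · exact le_rfl
    _ = (opSemiNorm Q).toReal * (s - f x) := by ring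

lemma apply_add_smul_le_norm (hQ : IsSublinearRate Q) (hQb : opSemiNorm Q ≠ ⊤) {h : ℝ}
    (hh : 0 ≤ h) (hhQ : h * (opSemiNorm Q).toReal ≤ 1) (f : X →ᵇ ℝ) (x : X) :
    f x + h * Q f x ≤ ‖f‖ := by
  have : Nonempty X := ⟨x⟩
  have hbdd : BddAbove (Set.range f) := ⟨‖f‖, Set.forall_mem_range.2 f.apply_le_norm⟩
  have hfx : f x ≤ ⨆ y, f y := le_ciSup hbdd x
  calc f x + h * Q f x ≤ f x + h * (opSemiNorm Q).toReal * ((⨆ y, f y) - f x) := by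
        rw [mul_assoc]
        gcongr
        exact hQ.apply_le_mul_iSup_sub hQb f x
    _ ≤ f x + 1 * ((⨆ y, f y) - f x) :=
        add_le_add le_rfl (mul_le_mul_of_nonneg_right hhQ (sub_nonneg.2 hfx))
    _ = ⨆ y, f y := by ring
    _ ≤ ‖f‖ := ciSup_le f.apply_le_norm

lemma norm_add_smul_le (hQ : IsSublinearRate Q) (hQb : opSemiNorm Q ≠ ⊤) {h : ℝ}
    (hh : 0 ≤ h) (hhQ : h * (opSemiNorm Q).toReal ≤ 1) (f : X →ᵇ ℝ) :
    ‖f + h • Q f‖ ≤ ‖f‖ := by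
  refine (norm_le (norm_nonneg f)).2 fun x => ?_
  have hneg := hQ.apply_add_smul_le_norm hQb hh hhQ (-f) x
  have hsub : 0 ≤ Q f x + Q (-f) x := by simpa [hQ.map_zero] using hQ.2.1 f (-f) x
  rw [norm_neg, coe_neg, Pi.neg_apply] at hneg
  rw [BoundedContinuousFunction.add_apply, BoundedContinuousFunction.smul_apply, smul_eq_mul,
    Real.norm_eq_abs, abs_le]
  exact ⟨by nlinarith, hQ.apply_add_smul_le_norm hQb hh hhQ f x⟩

end IsSublinearRate

section EulerStep

variable {E : Type*} [NormedAddCommGroup E]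

lemma norm_iterate_le_of_norm_apply_le {T : E → E} (hT : ∀ u, ‖T u‖ ≤ ‖u‖) (f : E) :
    ∀ k : ℕ, ‖T^[k] f‖ ≤ ‖f‖
  | 0 => le_rfl
  | k + 1 => by
    rw [Function.iterate_succ_apply']
    exact (hT _).trans (norm_iterate_le_of_norm_apply_le hT f k)

variable [NormedSpace ℝ E]

def eulerStep (Q : E → E) (h : ℝ) (u : E) : E := u + h • Q u

variable {Q : E → E} {K : ℝ≥0} {h : ℝ}

lemma norm_iterate_eulerStep_sub_self_le (hQ : LipschitzWith K Q) (hQ0 : Q 0 = 0)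
    (hh : 0 ≤ h) (hT : ∀ u, ‖eulerStep Q h u‖ ≤ ‖u‖) (f : E) :
    ∀ k : ℕ, ‖(eulerStep Q h)^[k] f - f‖ ≤ k * (h * K) * ‖f‖
  | 0 => by simp
  | k + 1 => by
    set u := (eulerStep Q h)^[k] f
    have hQu : ‖h • Q u‖ ≤ h * K * ‖f‖ := by
      have hu := norm_iterate_le_of_norm_apply_le hT f k
      have := hQ.norm_sub_le u 0
      rw [hQ0, sub_zero, sub_zero] at this
      rw [norm_smul, Real.norm_eq_abs, abs_of_nonneg hh, mul_assoc]
      gcongr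
      exact this.trans (mul_le_mul_of_nonneg_left hu K.2)
    calc ‖(eulerStep Q h)^[k + 1] f - f‖ = ‖(u - f) + h • Q u‖ := by
          simp only [u, Function.iterate_succ_apply', eulerStep]
          congr 1
          abel
      _ ≤ k * (h * K) * ‖f‖ + h * K * ‖f‖ :=
          (norm_add_le _ _).trans
            (add_le_add (norm_iterate_eulerStep_sub_self_le hQ hQ0 hh hT f k) hQu)
      _ = (k + 1 : ℕ) * (h * K) * ‖f‖ := by push_cast; ring

lemma norm_iterate_eulerStep_sub_le (hQ : LipschitzWith K Q) (hQ0 : Q 0 = 0)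
    (hh : 0 ≤ h) (hT : ∀ u, ‖eulerStep Q h u‖ ≤ ‖u‖) (f : E) :
    ∀ k : ℕ, ‖(eulerStep Q h)^[k] f - eulerStep Q (k * h) f‖ ≤ k ^ 2 / 2 * (h * K) ^ 2 * ‖f‖
  | 0 => by simp [eulerStep]
  | k + 1 => by
    set u := (eulerStep Q h)^[k] f
    have hQu : ‖h • (Q u - Q f)‖ ≤ k * (h * K) ^ 2 * ‖f‖ := by
      rw [norm_smul, Real.norm_eq_abs, abs_of_nonneg hh]
      calc h * ‖Q u - Q f‖ ≤ h * (K * (k * (h * K) * ‖f‖)) := by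
            gcongr
            exact (hQ.norm_sub_le u f).trans
              (by gcongr; exact norm_iterate_eulerStep_sub_self_le hQ hQ0 hh hT f k)
        _ = k * (h * K) ^ 2 * ‖f‖ := by ring
    calc ‖(eulerStep Q h)^[k + 1] f - eulerStep Q ((k + 1 : ℕ) * h) f‖
        = ‖(u - eulerStep Q (k * h) f) + h • (Q u - Q f)‖ := by
          simp only [u, Function.iterate_succ_apply', eulerStep, Nat.cast_succ, add_mul, one_mul,
            add_smul, smul_sub]
          congr 1
          abel
      _ ≤ k ^ 2 / 2 * (h * K) ^ 2 * ‖f‖ + k * (h * K) ^ 2 * ‖f‖ :=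
          (norm_add_le _ _).trans
            (add_le_add (norm_iterate_eulerStep_sub_le hQ hQ0 hh hT f k) hQu)
      _ ≤ (k + 1 : ℕ) ^ 2 / 2 * (h * K) ^ 2 * ‖f‖ := by
          push_cast
          nlinarith [mul_nonneg (sq_nonneg (h * K : ℝ)) (norm_nonneg f)]

end EulerStep

theorem stmt_9_general {X : Type*} [TopologicalSpace X] [DiscreteTopology X]
    (Q : Op X) (hQ : IsSublinearRate Q) (hQb : opSemiNorm Q ≠ ⊤) :
    ∀ Δ : ℝ, 0 ≤ Δ → ENNReal.ofReal Δ * opSemiNorm Q ≤ 2 →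
      ∀ l : ℕ, 1 ≤ l →
        opSemiNorm (euler Q Δ l - (fun f => f + Δ • Q f))
          ≤ ENNReal.ofReal Δ ^ 2 * opSemiNorm Q ^ 2 := by
  intro Δ hΔ hΔQ l hl
  set M := (opSemiNorm Q).toReal
  have hΔM : Δ * M ≤ 2 := by
    simpa [ENNReal.toReal_mul, hΔ] using ENNReal.toReal_mono (by norm_num) hΔQ
  have hbound : ∀ f, ‖euler Q Δ l f - eulerStep Q Δ f‖ ≤ Δ ^ 2 * M ^ 2 * ‖f‖ := by
    intro f
    obtain rfl | hl2 := hl.eq_or_lt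
    · simp only [euler, eulerStep, Function.iterate_one, Nat.cast_one, div_one, sub_self,
        norm_zero]
      positivity
    have hl0 : (0 : ℝ) < l := by positivity
    have hstep : Δ / l * M ≤ 1 := by
      rw [div_mul_eq_mul_div, div_le_one hl0]
      linarith [show (2 : ℝ) ≤ l by exact_mod_cast hl2]
    have hiter := norm_iterate_eulerStep_sub_le (hQ.lipschitzWith hQb) hQ.map_zero
      (by positivity) (hQ.norm_add_smul_le hQb (by positivity) hstep) f l
    rw [mul_div_cancel₀ _ hl0.ne'] at hiter
    refine hiter.trans ?_
    calc _ = Δ ^ 2 * M ^ 2 / 2 * ‖f‖ := by push_cast; field_simp; ring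
      _ ≤ Δ ^ 2 * M ^ 2 * ‖f‖ := by gcongr; exact half_le_self (by positivity)
  calc opSemiNorm (euler Q Δ l - (fun f => f + Δ • Q f))
      ≤ ENNReal.ofReal (Δ ^ 2 * M ^ 2) := opSemiNorm_le_ofReal (by positivity) hbound
    _ = ENNReal.ofReal Δ ^ 2 * opSemiNorm Q ^ 2 := by
      rw [ENNReal.ofReal_mul (by positivity), ENNReal.ofReal_pow hΔ,
        ENNReal.ofReal_pow ENNReal.toReal_nonneg, ENNReal.ofReal_toReal hQb]

theorem stmt_9 {X : Type*} [Countable X] [TopologicalSpace X] [DiscreteTopology X]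
    (Q : Op X) (hQ : IsSublinearRate Q) (hQb : opSemiNorm Q ≠ ⊤) :
    ∀ Δ : ℝ, 0 ≤ Δ → ENNReal.ofReal Δ * opSemiNorm Q ≤ 2 →
      ∀ l : ℕ, 1 ≤ l →
        opSemiNorm (euler Q Δ l - (fun f => f + Δ • Q f))
          ≤ ENNReal.ofReal Δ ^ 2 * opSemiNorm Q ^ 2 :=
  stmt_9_general Q hQ hQb
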